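/- For complex s with 0 < Re(s) < 1, one may interchange summation and integration: ∫₀^∞ [Σ_{k=1}^∞ (1/k²) ∫₀¹ √u · sin(πk²x/(2u)) du] x^{s-1} dx = Σ_{k=1}^∞ (1/k²) ∫₀¹ √u [∫₀^∞ sin(πk²x/(2u)) x^{s-1} dx] du, where the outer integral on the left is understood as lim_{A→∞} ∫_{1/A}^A. -/

import Mathlib

/-!
On a truncated range `[1/A, A]` everything converges absolutely: each inner `u`-integral is
bounded by `1`, so the series converges uniformly and may be integrated termwise, and Fubini
swaps the `x`- and `u`-integrals. It remains to let `A → ∞` inside `Σ_k k⁻² ∫₀¹ √u (·) du`, which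
is dominated convergence (Tannery's theorem for the sum). The domination comes from a bound on
`∫_{1/A}^A sin(c x) x^(s-1) dx` uniform in `A ≥ 1` and `c ≥ 1` (here `c = π k² / (2u) ≥ π / 2`):
the piece over `[1/A, 1]` is at most `∫₀¹ x^(Re s - 1) dx = 1 / Re s`, and one integration by
parts (against `-cos(c x) / c`) bounds the piece over `[1, A]` by `(2 + ‖s - 1‖ / (1 - Re s)) / c`.
-/

open Complex Real Filter MeasureTheory intervalIntegral Set Function
open scoped Interval Topology

theorem stronglyMeasurable_intervalIntegral {α E : Type*} [MeasurableSpace α]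
    [NormedAddCommGroup E] [NormedSpace ℝ E] {f : α → ℝ → E}
    (hf : StronglyMeasurable (uncurry f)) (a b : ℝ) :
    StronglyMeasurable fun x => ∫ y in a..b, f x y :=
  hf.integral_prod_right.sub hf.integral_prod_right

theorem intervalIntegral_swap_of_norm_le {E : Type*} [NormedAddCommGroup E] [NormedSpace ℝ E]
    {f : ℝ → ℝ → E} {g : ℝ → ℝ} {a b c d : ℝ}
    (hf : AEStronglyMeasurable (uncurry f) (volume.restrict (Ι a b ×ˢ Ι c d)))
    (hfg : ∀ x ∈ Ι a b, ∀ y ∈ Ι c d, ‖f x y‖ ≤ g x) (hg : IntervalIntegrable g volume a b) :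
    ∫ x in a..b, ∫ y in c..d, f x y = ∫ y in c..d, ∫ x in a..b, f x y := by
  refine intervalIntegral_intervalIntegral_swap (Integrable.mono' (g := fun p => g p.1) ?_ hf ?_)
  · have : IsFiniteMeasure (volume.restrict (Ι c d)) := isFiniteMeasure_restrict_Ioc _ _
    rw [Measure.volume_eq_prod, ← Measure.prod_restrict]
    exact hg.def'.comp_fst _
  · filter_upwards [ae_restrict_mem (measurableSet_uIoc.prod measurableSet_uIoc)] with p hp
    exact hfg p.1 hp.1 p.2 hp.2

theorem intervalIntegral_ofReal_tsum_mul {ι : Type*} [Countable ι] {w : ι → ℝ} {f : ι → ℝ → ℝ}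
    {g : ℝ → ℂ} {a b C : ℝ} (hw : Summable w)
    (hf_meas : ∀ i, AEStronglyMeasurable (f i) (volume.restrict (Ι a b)))
    (hf : ∀ i x, |f i x| ≤ C) (hg : IntervalIntegrable g volume a b) :
    ∫ x in a..b, ((∑' i, w i * f i x : ℝ) : ℂ) * g x
      = ∑' i, (w i : ℂ) * ∫ x in a..b, (f i x : ℂ) * g x := by
  simp_rw [← intervalIntegral.integral_const_mul]
  refine (hasSum_integral_of_dominated_convergence (fun i x => |w i| * (C * ‖g x‖))
    (fun i => ?_) (fun i => .of_forall fun x _ => ?_) (.of_forall fun x _ => ?_) ?_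
    (.of_forall fun x _ => ?_)).tsum_eq.symm
  · exact aestronglyMeasurable_const.mul
      ((continuous_ofReal.comp_aestronglyMeasurable (hf_meas i)).mul hg.def'.aestronglyMeasurable)
  · rw [← mul_assoc, norm_mul, ← ofReal_mul, norm_real, norm_eq_abs, abs_mul, mul_assoc]
    gcongr
    exact hf i x
  · exact hw.abs.mul_right _
  · simp_rw [tsum_mul_right]
    exact (hg.norm.const_mul C).const_mul _
  · have hsum : Summable fun i => w i * f i x :=
      (hw.abs.mul_right C).of_norm_bounded fun i => by
        rw [norm_mul, norm_eq_abs]; gcongr; exact hf i x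
    simpa only [← mul_assoc, ← ofReal_mul, ofReal_tsum, ofRealCLM_apply] using
      (hsum.hasSum.mapL ofRealCLM).mul_right (g x)

theorem tendsto_tsum_mul_intervalIntegral_of_dominated {α ι : Type*} [Countable ι] {l : Filter α}
    [l.IsCountablyGenerated] {w : ι → ℂ} {g : ℝ → ℂ} {F : α → ι → ℝ → ℂ} {G : ι → ℝ → ℂ}
    {a b K : ℝ} (hw : Summable fun i => ‖w i‖) (hg : IntervalIntegrable g volume a b)
    (hF_meas : ∀ᶠ A in l, ∀ i, AEStronglyMeasurable (F A i) (volume.restrict (Ι a b)))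
    (hF_le : ∀ᶠ A in l, ∀ i, ∀ u ∈ Ι a b, ‖F A i u‖ ≤ K)
    (hFG : ∀ i, ∀ u ∈ Ι a b, Tendsto (fun A => F A i u) l (𝓝 (G i u))) :
    Tendsto (fun A => ∑' i, w i * ∫ u in a..b, g u * F A i u) l
      (𝓝 (∑' i, w i * ∫ u in a..b, g u * G i u)) := by
  have hbound : ∀ᶠ A in l, ∀ i, ∀ u ∈ Ι a b, ‖g u * F A i u‖ ≤ ‖g u‖ * K :=
    hF_le.mono fun A hA i u hu => (norm_mul_le _ _).trans (by gcongr; exact hA i u hu)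
  refine tendsto_tsum_of_dominated_convergence
    (bound := fun i => ‖w i‖ * |∫ u in a..b, ‖g u‖ * K|) (hw.mul_right _) (fun i => ?_) ?_
  · refine (tendsto_integral_filter_of_dominated_convergence (fun u => ‖g u‖ * K)
      (hF_meas.mono fun A hA => hg.def'.aestronglyMeasurable.mul (hA i))
      (hbound.mono fun A hA => .of_forall (hA i)) (hg.norm.mul_const K)
      (.of_forall fun u hu => (hFG i u hu).const_mul (g u))).const_mul (w i)
  · filter_upwards [hbound] with A hA i
    rw [norm_mul]
    gcongr
    exact norm_integral_le_abs_of_norm_le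
      ((ae_restrict_mem measurableSet_uIoc).mono (hA i)) (hg.norm.mul_const K)

theorem norm_ofReal_sin_mul_cpow_le (s : ℂ) (c : ℝ) {x : ℝ} (hx : 0 < x) :
    ‖(Real.sin (c * x) : ℂ) * (x : ℂ) ^ (s - 1)‖ ≤ x ^ (s.re - 1) := by
  rw [norm_mul, norm_cpow_eq_rpow_re_of_pos hx, norm_real, sub_re, one_re]
  exact mul_le_of_le_one_left (by positivity) (abs_sin_le_one _)

theorem norm_integral_sin_mul_cpow_le_of_le_one {s : ℂ} (hs : 0 < s.re) (c : ℝ) {a : ℝ}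
    (ha : 0 < a) (ha1 : a ≤ 1) :
    ‖∫ x in a..1, (Real.sin (c * x) : ℂ) * (x : ℂ) ^ (s - 1)‖ ≤ 1 / s.re := by
  calc ‖∫ x in a..1, (Real.sin (c * x) : ℂ) * (x : ℂ) ^ (s - 1)‖
      ≤ ∫ x in a..1, x ^ (s.re - 1) :=
        norm_integral_le_of_norm_le ha1
          (.of_forall fun x hx => norm_ofReal_sin_mul_cpow_le s c (ha.trans hx.1))
          (intervalIntegrable_rpow' (by linarith))
    _ = (1 - a ^ s.re) / s.re := by
        rw [integral_rpow (.inl (by linarith)), sub_add_cancel, one_rpow]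
    _ ≤ 1 / s.re := by gcongr; linarith [rpow_nonneg ha.le s.re]

theorem norm_ofReal_neg_cos_div_le {c : ℝ} (hc : 0 < c) (x : ℝ) :
    ‖((-Real.cos (c * x) / c : ℝ) : ℂ)‖ ≤ 1 / c := by
  rw [norm_real, norm_div, norm_neg, Real.norm_of_nonneg hc.le]
  gcongr
  exact abs_cos_le_one _

theorem norm_integral_cpow_mul_cos_le {s : ℂ} (hs : s.re < 1) {c : ℝ} (hc : 0 < c) {b : ℝ}
    (hb : 1 ≤ b) :
    ‖∫ x in (1:ℝ)..b, (s - 1) * (x : ℂ) ^ (s - 1 - 1) * ((-Real.cos (c * x) / c : ℝ) : ℂ)‖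
      ≤ ‖s - 1‖ / (1 - s.re) / c := by
  have h0b : (0 : ℝ) ∉ [[1, b]] := notMem_uIcc_of_lt one_pos (by linarith)
  calc _ ≤ ∫ x in (1:ℝ)..b, ‖s - 1‖ / c * x ^ (s.re - 2) := by
        refine norm_integral_le_of_norm_le hb (.of_forall fun x hx => ?_)
          ((intervalIntegrable_rpow (.inr h0b)).const_mul _)
        have hx0 : 0 < x := by linarith [hx.1]
        rw [norm_mul, norm_mul, norm_cpow_eq_rpow_re_of_pos hx0,
          show (s - 1 - 1).re = s.re - 2 by simp; ring, mul_right_comm]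
        gcongr
        exact (mul_le_mul_of_nonneg_left (norm_ofReal_neg_cos_div_le hc x)
          (norm_nonneg (s - 1))).trans_eq (mul_one_div _ _)
    _ = ‖s - 1‖ / c * ((1 - b ^ (s.re - 1)) / (1 - s.re)) := by
        rw [intervalIntegral.integral_const_mul,
          integral_rpow (.inr ⟨by linarith, h0b⟩), one_rpow]
        congr 1
        rw [show s.re - 2 + 1 = s.re - 1 by ring, ← neg_div_neg_eq]
        ring_nf
    _ ≤ ‖s - 1‖ / (1 - s.re) / c := by
        rw [div_mul_div_comm, div_div, mul_comm c]
        have : 0 < c * (1 - s.re) := mul_pos hc (by linarith)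
        gcongr
        exact mul_le_of_le_one_right (norm_nonneg _)
          (by linarith [rpow_nonneg (zero_le_one.trans hb) (s.re - 1)])

theorem norm_integral_sin_mul_cpow_le_of_one_le {s : ℂ} (hs : s.re < 1) {c : ℝ} (hc : 0 < c)
    {b : ℝ} (hb : 1 ≤ b) :
    ‖∫ x in (1:ℝ)..b, (Real.sin (c * x) : ℂ) * (x : ℂ) ^ (s - 1)‖
      ≤ (2 + ‖s - 1‖ / (1 - s.re)) / c := by
  have hU : ∀ x ∈ [[1, b]], HasDerivAt (fun y : ℝ => (y : ℂ) ^ (s - 1))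
      ((s - 1) * (x : ℂ) ^ (s - 1 - 1)) x := fun x hx => by
    rw [uIcc_of_le hb] at hx
    exact hasDerivAt_ofReal_cpow_const (by linarith [hx.1])
      (sub_ne_zero.mpr fun h => by simp [h] at hs)
  have hV : ∀ x ∈ [[1, b]], HasDerivAt (fun y : ℝ => ((-Real.cos (c * y) / c : ℝ) : ℂ))
      (Real.sin (c * x) : ℂ) x := fun x _ => by
    have := ((hasDerivAt_id x).const_mul c).cos.neg.div_const c
    simp only [mul_one, id, neg_mul, neg_neg, mul_div_cancel_right₀ _ hc.ne'] at this
    exact this.ofReal_comp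
  have hparts := integral_mul_deriv_eq_deriv_mul hU hV
    ((intervalIntegrable_cpow (.inr (notMem_uIcc_of_lt one_pos (by linarith)))).const_mul _)
    (Continuous.intervalIntegrable (by fun_prop) _ _)
  have hboundary : ∀ x : ℝ, 1 ≤ x →
      ‖(x : ℂ) ^ (s - 1) * ((-Real.cos (c * x) / c : ℝ) : ℂ)‖ ≤ 1 / c := fun x hx => by
    have hUle : ‖(x : ℂ) ^ (s - 1)‖ ≤ 1 := by
      rw [norm_cpow_eq_rpow_re_of_pos (by linarith), sub_re, one_re]
      exact rpow_le_one_of_one_le_of_nonpos hx (by linarith)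
    rw [norm_mul]
    exact (mul_le_of_le_one_left (norm_nonneg _) hUle).trans (norm_ofReal_neg_cos_div_le hc x)
  calc ‖∫ x in (1:ℝ)..b, (Real.sin (c * x) : ℂ) * (x : ℂ) ^ (s - 1)‖
      = ‖(b : ℂ) ^ (s - 1) * ((-Real.cos (c * b) / c : ℝ) : ℂ)
          - (1 : ℝ) ^ (s - 1) * ((-Real.cos (c * 1) / c : ℝ) : ℂ)
          - ∫ x in (1:ℝ)..b,
              (s - 1) * (x : ℂ) ^ (s - 1 - 1) * ((-Real.cos (c * x) / c : ℝ) : ℂ)‖ := by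
        rw [← hparts]
        exact congrArg norm (integral_congr fun x _ => mul_comm _ _)
    _ ≤ 1 / c + 1 / c + ‖s - 1‖ / (1 - s.re) / c := by
        refine (norm_sub_le _ _).trans (add_le_add ((norm_sub_le _ _).trans ?_)
          (norm_integral_cpow_mul_cos_le hs hc hb))
        exact add_le_add (hboundary b hb) (hboundary 1 le_rfl)
    _ = (2 + ‖s - 1‖ / (1 - s.re)) / c := by ring

theorem norm_integral_sin_mul_cpow_le {s : ℂ} (h0 : 0 < s.re) (h1 : s.re < 1) {c : ℝ} (hc : 1 ≤ c)
    {a b : ℝ} (ha : 0 < a) (ha1 : a ≤ 1) (hb : 1 ≤ b) :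
    ‖∫ x in a..b, (Real.sin (c * x) : ℂ) * (x : ℂ) ^ (s - 1)‖
      ≤ 1 / s.re + (2 + ‖s - 1‖ / (1 - s.re)) := by
  have hint : ∀ {a b : ℝ}, 0 < a → 0 < b →
      IntervalIntegrable (fun x : ℝ => (Real.sin (c * x) : ℂ) * (x : ℂ) ^ (s - 1)) volume a b :=
    fun ha hb => (intervalIntegrable_cpow (.inr (notMem_uIcc_of_lt ha hb))).continuousOn_mul
      (by fun_prop)
  rw [← integral_add_adjacent_intervals (hint ha one_pos) (hint one_pos (by linarith))]
  refine (norm_add_le _ _).trans (add_le_add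
    (norm_integral_sin_mul_cpow_le_of_le_one h0 c ha ha1) ?_)
  exact (norm_integral_sin_mul_cpow_le_of_one_le h1 (by linarith) hb).trans
    (div_le_self (by positivity) hc)

theorem summable_one_div_pnat_sq : Summable fun k : ℕ+ => 1 / (k : ℝ) ^ 2 :=
  (summable_one_div_nat_pow.mpr one_lt_two).comp_injective PNat.coe_injective

theorem abs_sqrt_mul_sin_le_one {u : ℝ} (hu : u ≤ 1) (t : ℝ) : |√u * Real.sin t| ≤ 1 := by
  rw [abs_mul, abs_of_nonneg (sqrt_nonneg u)]
  exact mul_le_one₀ (sqrt_le_one.mpr hu) (abs_nonneg _) (abs_sin_le_one t)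

theorem intervalIntegral_sqrt_sin_mul_cpow_swap (s : ℂ) (k : ℝ) {a b : ℝ} (ha : 0 < a)
    (hb : 0 < b) :
    ∫ x in a..b, ((∫ u in (0:ℝ)..1, √u * Real.sin (π * k ^ 2 * x / (2 * u)) : ℝ) : ℂ)
        * (x : ℂ) ^ (s - 1)
      = ∫ u in (0:ℝ)..1, (√u : ℂ) *
          ∫ x in a..b, Complex.sin ((π * k ^ 2 * x / (2 * u) : ℝ) : ℂ) * (x : ℂ) ^ (s - 1) := by
  have hint : IntervalIntegrable (fun x : ℝ => (x : ℂ) ^ (s - 1)) volume a b :=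
    intervalIntegrable_cpow (.inr (notMem_uIcc_of_lt ha hb))
  calc _ = ∫ x in a..b, ∫ u in (0:ℝ)..1,
          ((√u * Real.sin (π * k ^ 2 * x / (2 * u)) : ℝ) : ℂ) * (x : ℂ) ^ (s - 1) := by
        simp_rw [← intervalIntegral.integral_ofReal, intervalIntegral.integral_mul_const]
    _ = ∫ u in (0:ℝ)..1, ∫ x in a..b,
          ((√u * Real.sin (π * k ^ 2 * x / (2 * u)) : ℝ) : ℂ) * (x : ℂ) ^ (s - 1) := by
        refine intervalIntegral_swap_of_norm_le (by fun_prop : Measurable _).aestronglyMeasurable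
          (fun x _ u hu => ?_) hint.norm
        rw [uIoc_of_le zero_le_one] at hu
        rw [norm_mul, norm_real, norm_eq_abs]
        exact mul_le_of_le_one_left (norm_nonneg _) (abs_sqrt_mul_sin_le_one hu.2 _)
    _ = _ := by
        simp_rw [ofReal_mul, mul_assoc, intervalIntegral.integral_const_mul, ofReal_sin]

theorem intervalIntegral_tsum_sqrt_sin_mul_cpow (s : ℂ) {a b : ℝ} (ha : 0 < a) (hb : 0 < b) :
    ∫ x in a..b, ((∑' k : ℕ+, (1 / (k : ℝ) ^ 2) *
        ∫ u in (0:ℝ)..1, √u * Real.sin (π * (k : ℝ) ^ 2 * x / (2 * u)) : ℝ) : ℂ)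
        * (x : ℂ) ^ (s - 1)
      = ∑' k : ℕ+, (1 / (k : ℂ) ^ 2) * ∫ u in (0:ℝ)..1, (√u : ℂ) *
          ∫ x in a..b,
            Complex.sin ((π * (k : ℝ) ^ 2 * x / (2 * u) : ℝ) : ℂ) * (x : ℂ) ^ (s - 1) := by
  rw [intervalIntegral_ofReal_tsum_mul (C := 1) summable_one_div_pnat_sq
    (fun k => (stronglyMeasurable_intervalIntegral
      (by fun_prop : Measurable _).stronglyMeasurable _ _).aestronglyMeasurable)
    (fun k x => ?_) (intervalIntegrable_cpow (.inr (notMem_uIcc_of_lt ha hb)))]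
  · refine tsum_congr fun k => ?_
    rw [intervalIntegral_sqrt_sin_mul_cpow_swap s k ha hb]
    push_cast
    rfl
  · rw [← norm_eq_abs]
    refine (intervalIntegral.norm_integral_le_of_norm_le_const (C := 1) fun u hu => ?_).trans_eq
      (by norm_num : (1 : ℝ) * |1 - 0| = 1)
    rw [uIoc_of_le zero_le_one] at hu
    exact abs_sqrt_mul_sin_le_one hu.2 _

theorem norm_integral_sin_div_mul_cpow_le {s : ℂ} (h0 : 0 < s.re) (h1 : s.re < 1) {k u A : ℝ}
    (hk : 1 ≤ k) (hu : u ∈ Ioc 0 1) (hA : 1 ≤ A) :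
    ‖∫ x in (1 / A)..A, Complex.sin ((π * k ^ 2 * x / (2 * u) : ℝ) : ℂ) * (x : ℂ) ^ (s - 1)‖
      ≤ 1 / s.re + (2 + ‖s - 1‖ / (1 - s.re)) := by
  have hc : 1 ≤ π * k ^ 2 / (2 * u) := by
    rw [le_div_iff₀ (by linarith [hu.1])]
    nlinarith [pi_gt_three, hu.2]
  simp_rw [← ofReal_sin, mul_div_right_comm (π * k ^ 2)]
  exact norm_integral_sin_mul_cpow_le h0 h1 hc (by positivity)
    ((div_le_one (by positivity)).mpr hA) hA

/-- For `0 < Re s < 1` one may interchange summation and integration: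
`∫₀^∞ [Σ_k (1/k²) ∫₀¹ √u sin(πk²x/(2u)) du] x^(s-1) dx
  = Σ_k (1/k²) ∫₀¹ √u [∫₀^∞ sin(πk²x/(2u)) x^(s-1) dx] du`,
where the outer integral on the left is `lim_{A→∞} ∫_{1/A}^A` and `I k u` denotes
the (convergent) inner improper integral. -/
theorem interchange_sum_integral (s : ℂ) (h0 : 0 < s.re) (h1 : s.re < 1)
    (I : ℕ+ → ℝ → ℂ)
    (hI : ∀ (k : ℕ+) (u : ℝ), 0 < u →
      Tendsto (fun A : ℝ => ∫ x in (1 / A)..A,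
          Complex.sin ((Real.pi * (k : ℝ) ^ 2 * x / (2 * u) : ℝ) : ℂ) *
            (x : ℂ) ^ (s - 1)) atTop (nhds (I k u))) :
    Tendsto (fun A : ℝ => ∫ x in (1 / A)..A,
        ((∑' k : ℕ+, (1 / (k : ℝ) ^ 2) *
          ∫ u in (0:ℝ)..1, Real.sqrt u *
            Real.sin (Real.pi * (k : ℝ) ^ 2 * x / (2 * u)) : ℝ) : ℂ) *
          (x : ℂ) ^ (s - 1)) atTop
      (nhds (∑' k : ℕ+, (1 / (k : ℂ) ^ 2) *
        ∫ u in (0:ℝ)..1, (Real.sqrt u : ℂ) * I k u)) := by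
  have hlim := tendsto_tsum_mul_intervalIntegral_of_dominated (l := atTop)
    (F := fun A (k : ℕ+) u => ∫ x in (1 / A)..A,
      Complex.sin ((π * (k : ℝ) ^ 2 * x / (2 * u) : ℝ) : ℂ) * (x : ℂ) ^ (s - 1))
    (G := I) (g := fun u => (√u : ℂ)) (w := fun k : ℕ+ => 1 / (k : ℂ) ^ 2)
    (by simpa using summable_one_div_pnat_sq) (Continuous.intervalIntegrable (by fun_prop) _ _)
    (.of_forall fun A k => (stronglyMeasurable_intervalIntegral
      (by fun_prop : Measurable _).stronglyMeasurable _ _).aestronglyMeasurable)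
    ((eventually_ge_atTop 1).mono fun A hA k u hu =>
      norm_integral_sin_div_mul_cpow_le h0 h1 (Nat.one_le_cast.mpr k.pos)
        (by rwa [uIoc_of_le zero_le_one] at hu) hA)
    (fun k u hu => hI k u (by rw [uIoc_of_le zero_le_one] at hu; exact hu.1))
  refine hlim.congr' ((eventually_gt_atTop 0).mono fun A hA => ?_)
  exact (intervalIntegral_tsum_sqrt_sin_mul_cpow s (by positivity) hA).symm
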